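/- Let P be a regular ω-poset and let U ⊆ P be an unbounded clique (pairwise adjacent under ⌅, and meeting C^≥ for every cap C). Then U_⌅ = {p : p ⌅ u for all u ∈ U} is the largest clique containing U, and U^⊲ = {q : ∃u ∈ U, u ⊲ q} is the smallest selector contained in U_⌅; moreover U^⊲ is a minimal selector, i.e. an element of the spectrum SP. -/

import Mathlib

namespace OP

section OmegaPoset

variable (P : Type*) [PartialOrder P]

/-- The n-th cone of the poset: `cone 0` is the set of maximal elements. -/
def cone : ℕ → Set P
  | 0 => {p | ∀ q, ¬ p < q}
  | n + 1 => {p | ∀ q, p < q → q ∈ cone n}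

/-- The n-th level: atoms (minimal elements) of the n-th cone. -/
def level (n : ℕ) : Set P := {p | p ∈ cone P n ∧ ∀ q, q < p → q ∉ cone P n}

/-- An ω-poset: all levels finite and every element in some cone. -/
def IsOmegaPoset : Prop := (∀ n, (level P n).Finite) ∧ ∀ p : P, ∃ n, p ∈ cone P n

variable {P}

/-- `refines A C` : every element of `A` lies below some element of `C` (`A ≤ C`). -/
def refines (A C : Set P) : Prop := ∀ a ∈ A, ∃ c ∈ C, a ≤ c

/-- A cap is a subset refined by some level. -/
def IsCap (C : Set P) : Prop := ∃ n, refines (level P n) C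

/-- A selector meets every cap. -/
def IsSelector (S : Set P) : Prop := ∀ C : Set P, IsCap C → (S ∩ C).Nonempty

/-- `wedge p q` : `p` and `q` have a common lower bound. -/
def wedge (p q : P) : Prop := ∃ r, r ≤ p ∧ r ≤ q

def wedgeSet (p : P) : Set P := {q | wedge p q}

/-- The adjacency relation `p ⌅ q`. -/
def barwedge (p q : P) : Prop := ∀ C : Set P, IsCap C → ∃ c ∈ C, wedge p c ∧ wedge c q

/-- `p ⊲_C q`. -/
def starBelowOn (C : Set P) (p q : P) : Prop := ∀ c ∈ C, wedge p c → c ≤ q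

/-- The star-below relation `p ⊲ q`. -/
def starBelow (p q : P) : Prop := ∃ n, starBelowOn (level P n) p q

/-- A clique: pairwise adjacent set. -/
def IsClique (X : Set P) : Prop := ∀ p ∈ X, ∀ q ∈ X, barwedge p q

/-- Unbounded subset: meets `C^≥` for every cap `C`. -/
def IsUnbounded (X : Set P) : Prop := ∀ C : Set P, IsCap C → ∃ u ∈ X, ∃ c ∈ C, u ≤ c

variable (P)

/-- Regularity: every level is eventually star-refined by a later level. -/
def IsRegular : Prop :=
  ∀ m, ∃ n, m < n ∧ ∀ p ∈ level P n, ∃ q ∈ level P m, starBelow p q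

/-- The spectrum: minimal selectors. -/
def Spec : Set (Set P) := {S | IsSelector S ∧ ∀ T ⊆ S, IsSelector T → T = S}

def SpecT : Type _ := {S : Set P // S ∈ Spec P}

instance : TopologicalSpace (SpecT P) :=
  TopologicalSpace.generateFrom {U | ∃ p : P, U = {S : SpecT P | p ∈ S.1}}

/-- The clique-spectrum: unbounded maximal cliques. -/
def CliqueSpec : Set (Set P) :=
  {X | IsUnbounded X ∧ IsClique X ∧ ∀ Y : Set P, IsClique Y → X ⊆ Y → Y = X}

def CliqueSpecT : Type _ := {X : Set P // X ∈ CliqueSpec P}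

instance : TopologicalSpace (CliqueSpecT P) :=
  TopologicalSpace.generateFrom {U | ∃ p : P, U = {X : CliqueSpecT P | p ∉ X.1}}

variable {P}

/-- The basic open set `p_S`. -/
def pSOpen (p : P) : Set (SpecT P) := {S | p ∈ S.1}

/-- The closed set `p̄_S = {S : S ⊆ p^∧}`. -/
def pSBar (p : P) : Set (SpecT P) := {S | S.1 ⊆ wedgeSet p}

/-- Prime ω-poset: every basic open set is nonempty. -/
def IsPrimePoset (P : Type*) [PartialOrder P] : Prop := ∀ p : P, (pSOpen p).Nonempty

end OmegaPoset

end OP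

/-!
Regularity lets an unbounded clique `U` reach every level: for each `m` some `u ∈ U` is
star-below an element `y` of level `m`, and then everything adjacent to `u` wedges `y`.
This makes `U^⊲` a selector and `U_⌅` a clique, while adjacency passes upwards along `⊲`,
so `U^⊲ ⊆ U_⌅`. For minimality, finiteness of the levels gives a single level `N` that
star-refines level `k` at level `N` itself; if `u ⊲ q` at level `k`, every element of level
`N` adjacent to `u` then lies below `q`, so a selector of elements adjacent to `u` must
meet the cap `{q} ∪ {d ∈ level N : ¬ d ⌅ u}` in `q`.
-/

open Filter

namespace OP

variable {P : Type*} [PartialOrder P]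

section Wedge

variable {p q r : P}

theorem wedge_of_le (h : p ≤ q) : wedge p q := ⟨p, le_rfl, h⟩

theorem wedge.symm : wedge p q → wedge q p
  | ⟨s, hsp, hsq⟩ => ⟨s, hsq, hsp⟩

theorem wedge.mono_left (h : wedge p q) (hpr : p ≤ r) : wedge r q :=
  let ⟨s, hsp, hsq⟩ := h; ⟨s, hsp.trans hpr, hsq⟩

theorem wedge.mono_right (h : wedge p q) (hqr : q ≤ r) : wedge p r :=
  let ⟨s, hsp, hsq⟩ := h; ⟨s, hsp, hsq.trans hqr⟩

end Wedge

section Levels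

theorem cone_subset_cone_succ (n : ℕ) : cone P n ⊆ cone P (n + 1) := by
  induction n with
  | zero => intro p hp q hq; exact absurd hq (hp q)
  | succ n ih => intro p hp q hq; exact ih (hp q hq)

theorem exists_mem_level_ge_of_mem_level_succ {p : P} {n : ℕ} (hp : p ∈ level P (n + 1)) :
    ∃ q ∈ level P n, p ≤ q := by
  obtain ⟨hpc, hpmin⟩ := hp
  by_cases hc : p ∈ cone P n
  · exact ⟨p, ⟨hc, fun r hr hrc => hpmin r hr (cone_subset_cone_succ n hrc)⟩, le_rfl⟩
  cases n with
  | zero =>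
    obtain ⟨r, hr⟩ : ∃ r, p < r := by simpa [cone] using hc
    exact ⟨r, ⟨hpc r hr, fun s hs hsc => hsc r hs⟩, hr.le⟩
  | succ m =>
    obtain ⟨r, hr, hrc⟩ : ∃ r, p < r ∧ r ∉ cone P m := by simpa [cone] using hc
    exact ⟨r, ⟨hpc r hr, fun s hs hsc => hrc (hsc r hs)⟩, hr.le⟩

theorem refines.trans {A B C : Set P} (hAB : refines A B) (hBC : refines B C) :
    refines A C := fun a ha =>
  let ⟨b, hb, hab⟩ := hAB a ha
  let ⟨c, hc, hbc⟩ := hBC b hb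
  ⟨c, hc, hab.trans hbc⟩

theorem level_refines {m n : ℕ} (h : m ≤ n) : refines (level P n) (level P m) := by
  induction n, h using Nat.le_induction with
  | base => exact fun a ha => ⟨a, ha, le_rfl⟩
  | succ n _ ih => exact refines.trans (fun a ha => exists_mem_level_ge_of_mem_level_succ ha) ih

theorem isCap_level (n : ℕ) : IsCap (level P n) := ⟨n, fun a ha => ⟨a, ha, le_rfl⟩⟩

end Levels

section StarBelow

variable {C : Set P} {p q : P}

theorem starBelowOn.of_le_left {p' : P} (h : starBelowOn C p q) (hp' : p' ≤ p) :
    starBelowOn C p' q := fun c hc hw => h c hc (hw.mono_left hp')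

theorem starBelowOn.mono_right {q' : P} (h : starBelowOn C p q) (hq : q ≤ q') :
    starBelowOn C p q' := fun c hc hw => (h c hc hw).trans hq

theorem starBelowOn.le_of_mem (h : starBelowOn C p q) (hp : p ∈ C) : p ≤ q :=
  h p hp (wedge_of_le le_rfl)

theorem starBelowOn_level_mono {j j' : ℕ} (h : j ≤ j') (hs : starBelowOn (level P j) p q) :
    starBelowOn (level P j') p q := fun d hd hw =>
  let ⟨e, he, hde⟩ := level_refines h d hd
  hde.trans (hs e he (hw.mono_right hde))

theorem starBelow.eventually (h : starBelow p q) :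
    ∀ᶠ j in atTop, starBelowOn (level P j) p q :=
  let ⟨n, hn⟩ := h
  (eventually_ge_atTop n).mono fun _ hj => starBelowOn_level_mono hj hn

end StarBelow

section Adjacency

theorem barwedge_of_starBelow {p q v : P} (hpq : starBelow p q) (hpv : barwedge p v) :
    barwedge q v := by
  rintro C ⟨m, hm⟩
  obtain ⟨j, hj⟩ := hpq
  obtain ⟨d, hd, hpd, hdv⟩ := hpv (level P (max j m)) (isCap_level _)
  have hdq : d ≤ q := starBelowOn_level_mono (le_max_left j m) hj d hd hpd
  obtain ⟨c, hc, hdc⟩ := (level_refines (le_max_right j m)).trans hm d hd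
  exact ⟨c, hc, (wedge_of_le hdc).mono_left hdq, hdv.mono_left hdc⟩

theorem wedge_of_barwedge_of_starBelowOn {C : Set P} (hC : IsCap C) {p u y : P}
    (hpu : barwedge p u) (huy : starBelowOn C u y) : wedge p y := by
  obtain ⟨e, he, hpe, heu⟩ := hpu C hC
  exact hpe.mono_right (huy e he heu.symm)

theorem le_of_barwedge_of_starBelowOn {C D : Set P} (hC : IsCap C) {d u y q : P}
    (hd : d ∈ C) (hdy : starBelowOn C d y) (hy : y ∈ D) (hdu : barwedge d u)
    (huq : starBelowOn D u q) : d ≤ q := by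
  obtain ⟨e, he, hde, heu⟩ := hdu C hC
  have hey : e ≤ y := hdy e he hde
  exact (hdy.le_of_mem hd).trans (huq y hy (heu.symm.mono_right hey))

end Adjacency

section Regular

theorem exists_starBelowOn_level_of_isUnbounded (hreg : IsRegular P) {U : Set P}
    (hunb : IsUnbounded U) (m : ℕ) :
    ∃ u ∈ U, ∃ y ∈ level P m, ∃ j, starBelowOn (level P j) u y := by
  obtain ⟨n, -, hstar⟩ := hreg m
  obtain ⟨u, hu, c, hc, huc⟩ := hunb (level P n) (isCap_level n)
  obtain ⟨y, hy, j, hj⟩ := hstar c hc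
  exact ⟨u, hu, y, hy, j, hj.of_le_left huc⟩

theorem exists_level_starBelowOn_self (hfin : ∀ n, (level P n).Finite) (hreg : IsRegular P)
    (k : ℕ) : ∃ N, ∀ d ∈ level P N, ∃ y ∈ level P k, starBelowOn (level P N) d y := by
  obtain ⟨n, -, hstar⟩ := hreg k
  have hev : ∀ᶠ N in atTop,
      n ≤ N ∧ ∀ w ∈ level P n, ∃ y ∈ level P k, starBelowOn (level P N) w y := by
    refine (eventually_ge_atTop n).and ((hfin n).eventually_all.2 fun w hw => ?_)
    obtain ⟨y, hy, hwy⟩ := hstar w hw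
    exact hwy.eventually.mono fun _ h => ⟨y, hy, h⟩
  obtain ⟨N, hnN, hN⟩ := hev.exists
  refine ⟨N, fun d hd => ?_⟩
  obtain ⟨w, hw, hdw⟩ := level_refines hnN d hd
  obtain ⟨y, hy, hwy⟩ := hN w hw
  exact ⟨y, hy, hwy.of_le_left hdw⟩

theorem mem_of_isSelector_of_starBelow (hfin : ∀ n, (level P n).Finite) (hreg : IsRegular P)
    {T : Set P} (hT : IsSelector T) {u q : P} (hTu : ∀ t ∈ T, barwedge t u)
    (huq : starBelow u q) : q ∈ T := by
  obtain ⟨k, hk⟩ := huq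
  obtain ⟨N, hN⟩ := exists_level_starBelowOn_self hfin hreg k
  have hcap : IsCap ({q} ∪ {d | d ∈ level P N ∧ ¬ barwedge d u}) := by
    refine ⟨N, fun d hd => ?_⟩
    by_cases hdu : barwedge d u
    · obtain ⟨y, hy, hdy⟩ := hN d hd
      exact ⟨q, Or.inl rfl, le_of_barwedge_of_starBelowOn (isCap_level N) hd hdy hy hdu hk⟩
    · exact ⟨d, Or.inr ⟨hd, hdu⟩, le_rfl⟩
  obtain ⟨t, htT, rfl | ⟨-, htu⟩⟩ := hT _ hcap
  · exact htT
  · exact absurd (hTu t htT) htu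

theorem isSelector_starBelow_image (hreg : IsRegular P) {U : Set P} (hunb : IsUnbounded U) :
    IsSelector {q | ∃ u ∈ U, starBelow u q} := by
  rintro C ⟨m, hm⟩
  obtain ⟨u, hu, y, hy, j, hj⟩ := exists_starBelowOn_level_of_isUnbounded hreg hunb m
  obtain ⟨c, hc, hyc⟩ := hm y hy
  exact ⟨c, ⟨u, hu, j, hj.mono_right hyc⟩, hc⟩

theorem isClique_adjacent_all (hreg : IsRegular P) {U : Set P} (hunb : IsUnbounded U) :
    IsClique {p | ∀ u ∈ U, barwedge p u} := by
  rintro p hp q hq C ⟨m, hm⟩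
  obtain ⟨u, hu, y, hy, j, hj⟩ := exists_starBelowOn_level_of_isUnbounded hreg hunb m
  obtain ⟨c, hc, hyc⟩ := hm y hy
  have hpy := wedge_of_barwedge_of_starBelowOn (isCap_level j) (hp u hu) hj
  have hqy := wedge_of_barwedge_of_starBelowOn (isCap_level j) (hq u hu) hj
  exact ⟨c, hc, hpy.mono_right hyc, (hqy.mono_right hyc).symm⟩

end Regular

end OP

open OP in
/-- For an unbounded clique `U` in a regular ω-poset, `U_⌅` is the largest clique
containing `U` and `U^⊲` is the smallest selector contained in `U_⌅`; moreover `U^⊲`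
is a minimal selector. -/
theorem stmt4 {P : Type*} [PartialOrder P] (hP : IsOmegaPoset P) (hreg : IsRegular P)
    (U : Set P) (hclique : IsClique U) (hunb : IsUnbounded U) :
    (IsClique {p | ∀ u ∈ U, barwedge p u} ∧ U ⊆ {p | ∀ u ∈ U, barwedge p u} ∧
      ∀ V : Set P, IsClique V → U ⊆ V → V ⊆ {p | ∀ u ∈ U, barwedge p u}) ∧
    (IsSelector {q | ∃ u ∈ U, starBelow u q} ∧
      {q | ∃ u ∈ U, starBelow u q} ⊆ {p | ∀ u ∈ U, barwedge p u} ∧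
      ∀ T : Set P, IsSelector T → T ⊆ {p | ∀ u ∈ U, barwedge p u} →
        {q | ∃ u ∈ U, starBelow u q} ⊆ T) ∧
    {q | ∃ u ∈ U, starBelow u q} ∈ Spec P := by
  have hsel := isSelector_starBelow_image hreg hunb
  have hsub : {q | ∃ u ∈ U, starBelow u q} ⊆ {p | ∀ u ∈ U, barwedge p u} :=
    fun q ⟨u, hu, huq⟩ v hv => barwedge_of_starBelow huq (hclique u hu v hv)
  have hmin : ∀ T : Set P, IsSelector T → T ⊆ {p | ∀ u ∈ U, barwedge p u} →
      {q | ∃ u ∈ U, starBelow u q} ⊆ T :=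
    fun T hT hTU q ⟨u, hu, huq⟩ =>
      mem_of_isSelector_of_starBelow hP.1 hreg hT (fun t ht => hTU ht u hu) huq
  refine ⟨⟨isClique_adjacent_all hreg hunb, fun p hp u hu => hclique p hp u hu,
      fun V hV hUV v hv u hu => hV v hv u (hUV hu)⟩, ⟨hsel, hsub, hmin⟩, hsel, ?_⟩
  exact fun T hT hTsel => hT.antisymm (hmin T hTsel (hT.trans hsub))
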